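/- Let χ be a nontrivial additive character of F_q, k ∈ {1,…,d}, j ∈ F_q^*, and let N_k be the set of m ∈ F_q^d with exactly k zero coordinates. Then for all g : F_q^d → ℂ, |⟨g, g ∗ ((dσ_j)^∨ 1_{N_k})⟩| ≤ C(d,k) ‖g‖_{ℓ^2(F_q^d)}^2 for a constant C(d,k) independent of q, where (dσ_j)^∨(m) = (q-1)^{-(d-1)} Σ_{x ∈ H_j} χ(m·x), (g∗h)(m) = Σ_n g(m-n)h(n), and ⟨g,h⟩ = Σ_m g(m) conj(h(m)). -/

import Mathlib

/-!
The kernel `K = 1_{N_k} (dσ_j)^∨` has `ℓ¹` norm exactly `C(d,k)`, and Young's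
inequality `|⟨g, g ∗ K⟩| ≤ ‖K‖₁ ‖g‖₂²` (from `2ab ≤ a² + b²` and translation invariance
of `‖·‖₂`) finishes the proof.

If `m_{i₀} = 0`, the phase `m · x` does not see `x_{i₀}`, while on `H_j` the remaining
coordinates range freely over `F^×` and determine `x_{i₀}`. The character sum over `H_j`
therefore factors into sums `∑_{s ≠ 0} χ(m_i s)`, equal to `q - 1` or `-1` according as
`m_i = 0` or not, so `|∑_{x ∈ H_j} χ(m · x)| = (q - 1)^{k - 1}` on `N_k`. Together with
`|N_k| = C(d,k) (q - 1)^{d - k}` the normalisation `(q - 1)^{-(d-1)}` gives `‖K‖₁ = C(d,k)`.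
-/

open Finset Function

section Counting

variable {ι α : Type*} [Fintype ι] [DecidableEq ι] [Fintype α] [DecidableEq α]

theorem filter_setOf_eq_piFinset (a : α) (Z : Finset ι) :
    ({v : ι → α | ({i | v i = a} : Finset ι) = Z} : Finset (ι → α))
      = Fintype.piFinset (fun i => if i ∈ Z then {a} else {a}ᶜ) := by
  ext v
  simp only [mem_filter, mem_univ, true_and, Fintype.mem_piFinset, Finset.ext_iff]
  refine forall_congr' fun i => ?_
  split_ifs <;> simp_all

theorem card_filter_card_filter_eq (a : α) (k : ℕ) :
    #{v : ι → α | #{i | v i = a} = k}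
      = (Fintype.card ι).choose k * (Fintype.card α - 1) ^ (Fintype.card ι - k) := by
  rw [card_eq_sum_card_fiberwise (f := fun v : ι → α => ({i | v i = a} : Finset ι))
    (t := powersetCard k univ) (fun v hv => by simpa using hv)]
  have card_fiber : ∀ Z ∈ powersetCard k (univ : Finset ι),
      #{v ∈ ({v : ι → α | #{i | v i = a} = k} : Finset _) | ({i | v i = a} : Finset ι) = Z}
        = (Fintype.card α - 1) ^ (Fintype.card ι - k) := by
    intro Z hZ
    rw [mem_powersetCard_univ] at hZ
    rw [filter_filter, filter_congr (q := fun v : ι → α => ({i | v i = a} : Finset ι) = Z)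
      (fun v _ => and_iff_right_of_imp fun h => h ▸ hZ), filter_setOf_eq_piFinset,
      Fintype.card_piFinset]
    simp [apply_ite Finset.card, prod_ite, filter_not, card_univ_sdiff, card_compl, hZ]
  rw [sum_congr rfl card_fiber, sum_const, card_powersetCard, card_univ, smul_eq_mul]

end Counting

theorem norm_sum_mul_conj_conv_le {α 𝕜 : Type*} [Fintype α] [AddCommGroup α] [RCLike 𝕜]
    (g h : α → 𝕜) :
    ‖∑ m, g m * starRingEnd 𝕜 (∑ n, g (m - n) * h n)‖
      ≤ (∑ n, ‖h n‖) * ∑ m, ‖g m‖ ^ 2 := by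
  have sum_mul_translate_le (n : α) :
      ∑ m, ‖g m‖ * ‖g (m - n)‖ ≤ ∑ m, ‖g m‖ ^ 2 := by
    have translate : ∑ m, ‖g (m - n)‖ ^ 2 = ∑ m, ‖g m‖ ^ 2 :=
      Fintype.sum_equiv (Equiv.subRight n) _ _ fun _ => rfl
    have := sum_le_sum fun m (_ : m ∈ univ) => two_mul_le_add_sq ‖g m‖ ‖g (m - n)‖
    rw [sum_add_distrib, translate] at this
    simp_rw [mul_assoc, ← mul_sum] at this
    linarith
  calc ‖∑ m, g m * starRingEnd 𝕜 (∑ n, g (m - n) * h n)‖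
      ≤ ∑ m, ‖g m‖ * ∑ n, ‖g (m - n)‖ * ‖h n‖ := by
        refine (norm_sum_le _ _).trans (sum_le_sum fun m _ => ?_)
        rw [norm_mul, RCLike.norm_conj]
        gcongr
        exact (norm_sum_le _ _).trans_eq (by simp_rw [norm_mul])
    _ = ∑ n, ‖h n‖ * ∑ m, ‖g m‖ * ‖g (m - n)‖ := by
        simp_rw [mul_sum]
        rw [sum_comm]
        exact sum_congr rfl fun _ _ => sum_congr rfl fun _ _ => by ring
    _ ≤ ∑ n, ‖h n‖ * ∑ m, ‖g m‖ ^ 2 := by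
        gcongr ∑ n, ‖h n‖ * ?_ with n
        exact sum_mul_translate_le n
    _ = (∑ n, ‖h n‖) * ∑ m, ‖g m‖ ^ 2 := (sum_mul _ _ _).symm

theorem Complex.norm_natCast_sub_one {n : ℕ} (hn : 0 < n) : ‖(n : ℂ) - 1‖ = n - 1 := by
  rw [← Nat.cast_pred hn, Complex.norm_natCast, Nat.cast_pred hn]

section CharacterSums

variable {ι F : Type*} [Fintype ι] [DecidableEq ι] [Field F] [Fintype F] [DecidableEq F]

theorem sum_filter_prod_eq_sum_piFinset {M : Type*} [AddCommMonoid M] {j : F} (hj : j ≠ 0)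
    (i₀ : ι) (f : (ι → F) → M) (hf : ∀ x a, f (update x i₀ a) = f x) :
    ∑ x ∈ univ.filter (fun x : ι → F => ∏ i, x i = j), f x
      = ∑ y ∈ Fintype.piFinset (update (fun _ => {0}ᶜ) i₀ {1}), f y := by
  have mem_piFinset {y : ι → F} :
      y ∈ Fintype.piFinset (update (fun _ => {0}ᶜ) i₀ {1}) ↔
        y i₀ = 1 ∧ ∀ i ≠ i₀, y i ≠ 0 := by
    rw [Fintype.mem_piFinset]
    refine ⟨fun h => ⟨by simpa using h i₀, fun i hi => by simpa [hi] using h i⟩,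
      fun ⟨h₁, h₂⟩ i => ?_⟩
    rcases eq_or_ne i i₀ with rfl | hi <;> simp [*]
  refine sum_nbij' (fun x => update x i₀ 1)
    (fun y => update y i₀ (j / ∏ i ∈ univ.erase i₀, y i)) ?_ ?_ ?_ ?_ fun x _ => (hf x 1).symm
  · intro x hx
    replace hx : ∏ i, x i = j := by simpa using hx
    exact mem_piFinset.mpr ⟨update_self .., fun i hi => by
      simpa [update_of_ne hi] using prod_ne_zero_iff.mp (hx ▸ hj) i (mem_univ i)⟩
  · intro y hy
    have hP : ∏ i ∈ univ.erase i₀, y i ≠ 0 :=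
      prod_ne_zero_iff.mpr fun i hi => (mem_piFinset.mp hy).2 i (ne_of_mem_erase hi)
    simp [prod_update_of_mem (mem_univ i₀), ← erase_eq, hP]
  · intro x hx
    replace hx : ∏ i, x i = j := by simpa using hx
    rw [← mul_prod_erase univ x (mem_univ i₀)] at hx
    have hP : ∏ i ∈ univ.erase i₀, x i ≠ 0 := right_ne_zero_of_mul (hx ▸ hj)
    have : ∏ i ∈ univ.erase i₀, update x i₀ 1 i = ∏ i ∈ univ.erase i₀, x i :=
      prod_congr rfl fun i hi => update_of_ne (ne_of_mem_erase hi) ..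
    simp [this, ← hx, hP]
  · intro y hy
    simp [← (mem_piFinset.mp hy).1]

namespace AddChar

theorem map_sum_eq_prod {A M κ : Type*} [AddCommMonoid A] [CommMonoid M] (ψ : AddChar A M)
    (s : Finset κ) (f : κ → A) : ψ (∑ i ∈ s, f i) = ∏ i ∈ s, ψ (f i) :=
  map_prod ψ.toMonoidHom (fun i => Multiplicative.ofAdd (f i)) s

theorem sum_mul_compl_zero {ψ : AddChar F ℂ} (hψ : ψ ≠ 1) (a : F) :
    ∑ s ∈ {0}ᶜ, ψ (a * s) = if a = 0 then (Fintype.card F : ℂ) - 1 else -1 := by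
  have h := sum_compl_add_sum {0} (fun s => ψ (s * a))
  rw [sum_mulShift a (IsPrimitive.of_ne_one hψ), sum_singleton, zero_mul,
    map_zero_eq_one] at h
  simp_rw [mul_comm a]
  split_ifs at h ⊢ <;> linear_combination h

theorem norm_sum_mul_compl_zero {ψ : AddChar F ℂ} (hψ : ψ ≠ 1) (a : F) :
    ‖∑ s ∈ {0}ᶜ, ψ (a * s)‖ = if a = 0 then (Fintype.card F : ℝ) - 1 else 1 := by
  rw [sum_mul_compl_zero hψ]
  split_ifs
  · exact Complex.norm_natCast_sub_one Fintype.card_pos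
  · simp

theorem norm_sum_filter_prod_eq_of_apply_eq_zero {ψ : AddChar F ℂ} (hψ : ψ ≠ 1) {j : F}
    (hj : j ≠ 0) {v : ι → F} {i₀ : ι} (hv : v i₀ = 0) :
    ‖∑ x ∈ univ.filter (fun x : ι → F => ∏ i, x i = j), ψ (∑ i, v i * x i)‖
      = ((Fintype.card F : ℝ) - 1) ^ (#{i | v i = 0} - 1) := by
  have indep (x : ι → F) (a : F) :
      ψ (∑ i, v i * update x i₀ a i) = ψ (∑ i, v i * x i) := by
    congr 1
    refine sum_congr rfl fun i _ => ?_
    rcases eq_or_ne i i₀ with rfl | hi <;> simp [*]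
  have norm_factor (i : ι) :
      ‖∑ s ∈ update (fun _ => ({0}ᶜ : Finset F)) i₀ {1} i, ψ (v i * s)‖
        = if i ∈ ({i | v i = 0} : Finset ι).erase i₀ then (Fintype.card F : ℝ) - 1 else 1 := by
    rcases eq_or_ne i i₀ with rfl | hi
    · simp [hv]
    · simp [hi, norm_sum_mul_compl_zero hψ]
  rw [sum_filter_prod_eq_sum_piFinset hj i₀ _ indep]
  simp_rw [map_sum_eq_prod]
  rw [← prod_univ_sum _ fun i s => ψ (v i * s), norm_prod]
  simp_rw [norm_factor]
  rw [Fintype.prod_ite_mem, prod_const, card_erase_of_mem (by simpa using hv)]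

end AddChar

noncomputable def surfaceMeasureInvFourier {d : ℕ} (χ : AddChar F ℂ) (j : F)
    (m : Fin d → F) : ℂ :=
  (((Fintype.card F : ℂ) - 1) ^ (d - 1))⁻¹ *
    ∑ x ∈ univ.filter (fun x : Fin d → F => ∏ i, x i = j), χ (∑ i, m i * x i)

theorem norm_surfaceMeasureInvFourier {d : ℕ} {χ : AddChar F ℂ} (hχ : χ ≠ 1) {j : F}
    (hj : j ≠ 0) {v : Fin d → F} {i₀ : Fin d} (hv : v i₀ = 0) :
    ‖surfaceMeasureInvFourier χ j v‖
      = ((Fintype.card F : ℝ) - 1) ^ (#{i | v i = 0} - 1)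
        / ((Fintype.card F : ℝ) - 1) ^ (d - 1) := by
  rw [surfaceMeasureInvFourier, norm_mul,
    AddChar.norm_sum_filter_prod_eq_of_apply_eq_zero hχ hj hv, norm_inv, norm_pow,
    Complex.norm_natCast_sub_one Fintype.card_pos, inv_mul_eq_div]

theorem sum_norm_indicator_surfaceMeasureInvFourier {d k : ℕ} (hk1 : 1 ≤ k) (hk2 : k ≤ d)
    {χ : AddChar F ℂ} (hχ : χ ≠ 1) {j : F} (hj : j ≠ 0) :
    ∑ n, ‖Set.indicator {v : Fin d → F | #{i | v i = 0} = k}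
        (surfaceMeasureInvFourier χ j) n‖ = d.choose k := by
  have hq : (0 : ℝ) < (Fintype.card F : ℝ) - 1 := by
    rw [sub_pos]; exact_mod_cast Fintype.one_lt_card
  have norm_eq (v : Fin d → F)
      (hv : v ∈ ({v | #{i | v i = 0} = k} : Finset (Fin d → F))) :
      ‖surfaceMeasureInvFourier χ j v‖
        = ((Fintype.card F : ℝ) - 1) ^ (k - 1) / ((Fintype.card F : ℝ) - 1) ^ (d - 1) := by
    rw [mem_filter] at hv
    obtain ⟨i₀, hi₀⟩ : ({i | v i = 0} : Finset (Fin d)).Nonempty := by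
      rw [← card_pos, hv.2]; exact hk1
    rw [norm_surfaceMeasureInvFourier hχ hj (mem_filter.mp hi₀).2, hv.2]
  simp_rw [norm_indicator_eq_indicator_norm, Set.indicator_apply, Set.mem_ofPred_eq]
  rw [← sum_filter, sum_congr rfl norm_eq, sum_const, card_filter_card_filter_eq,
    Fintype.card_fin, nsmul_eq_mul]
  push_cast [Nat.cast_sub Fintype.card_pos]
  rw [mul_assoc, mul_div_assoc', ← pow_add, show d - k + (k - 1) = d - 1 by omega,
    div_self (pow_ne_zero _ hq.ne'), mul_one]

end CharacterSums

/-- For `1 ≤ k ≤ d`, `|⟨g, g ∗ ((dσ_j)^∨ 1_{N_k})⟩| ≤ C ‖g‖²_{ℓ²}` with a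
constant `C = C(d,k)` independent of `q`. -/
theorem inner_conv_Nk_bound (d k : ℕ) (hk1 : 1 ≤ k) (hk2 : k ≤ d) :
    ∃ C : ℝ, 0 < C ∧
      ∀ (F : Type) [Field F] [Fintype F] [DecidableEq F],
        Odd (Fintype.card F) →
        ∀ (χ : AddChar F ℂ), χ ≠ 1 →
        ∀ j : F, j ≠ 0 →
        ∀ g : (Fin d → F) → ℂ,
          ‖(∑ m : Fin d → F, g m *
              (starRingEnd ℂ) (∑ n : Fin d → F, g (m - n) *
                (Set.indicator {v : Fin d → F |
                    (Finset.univ.filter (fun i : Fin d => v i = 0)).card = k}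
                  (fun v => (((Fintype.card F : ℂ) - 1) ^ (d - 1))⁻¹ *
                    ∑ x ∈ Finset.univ.filter (fun x : Fin d → F => ∏ i, x i = j),
                      χ (∑ i, v i * x i)) n)))‖
            ≤ C * ∑ m : Fin d → F, ‖g m‖ ^ 2 := by
  refine ⟨d.choose k, mod_cast Nat.choose_pos hk2, fun F _ _ _ _ χ hχ j hj g => ?_⟩
  have young := norm_sum_mul_conj_conv_le g
    (Set.indicator {v : Fin d → F | #{i | v i = 0} = k} (surfaceMeasureInvFourier χ j))
  rwa [sum_norm_indicator_surfaceMeasureInvFourier hk1 hk2 hχ hj] at young
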